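/- Let q₂ ∈ ℝ, q₄ > 0 with q₄ + 2 > 2q₂, and p > 0. Define for |x| large X_k(x) = |x|^{q₂} e_k (k = 1,...,d) and X_0(x) = -|x|^{q₄} x. Then there exist C(p) > 0 and R₀ > 0 such that for all |x| ≥ R₀: sup_{|y| ≤ 1} ( Σ_{k=1}^d p |X_k(x+y)|² + ⟨x, X_0(x+y)⟩ ) ≤ -C(p)(1 + |x|^{q₄+2}) ≤ C(p)(1+|x|²). -/

import Mathlib

open scoped RealInnerProductSpace
open Filter

/-! Near a large `x`, the point `x + y` with `‖y‖ ≤ 1` has norm comparable to `‖x‖`, so the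
diffusion part is `O(‖x‖ ^ (2 * q₂))` while the drift part is at most `-c ‖x‖ ^ (q₄ + 2)`.
Since `2 * q₂ < q₄ + 2`, the drift wins for `‖x‖` large. -/

section NormComparison

variable {E : Type*} [SeminormedAddCommGroup E] {x y : E}

lemma half_norm_le_norm_add (hy : ‖y‖ ≤ ‖x‖ / 2) : ‖x‖ / 2 ≤ ‖x + y‖ := by
  have := norm_sub_norm_le x (-y)
  rw [norm_neg, sub_neg_eq_add] at this
  linarith

lemma norm_add_le_two_mul_norm (hy : ‖y‖ ≤ ‖x‖ / 2) : ‖x + y‖ ≤ 2 * ‖x‖ := by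
  linarith [norm_add_le x y, norm_nonneg x]

end NormComparison

lemma rpow_le_two_rpow_abs_mul_rpow {a b : ℝ} (q : ℝ) (hb : 0 < b) (hlo : b / 2 ≤ a)
    (hhi : a ≤ 2 * b) : a ^ q ≤ 2 ^ |q| * b ^ q := by
  rcases le_or_gt 0 q with hq | hq
  · calc a ^ q ≤ (2 * b) ^ q := Real.rpow_le_rpow (by linarith) hhi hq
      _ = 2 ^ |q| * b ^ q := by rw [abs_of_nonneg hq, Real.mul_rpow zero_le_two hb.le]
  · calc a ^ q ≤ (b / 2) ^ q := Real.rpow_le_rpow_of_nonpos (half_pos hb) hlo hq.le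
      _ = 2 ^ |q| * b ^ q := by
        rw [abs_of_neg hq, Real.div_rpow hb.le zero_le_two, Real.rpow_neg zero_le_two]
        ring

section Drift

variable {E : Type*} [NormedAddCommGroup E] [InnerProductSpace ℝ E] {x y : E}

lemma sq_norm_div_two_le_inner_add (hy : ‖y‖ ≤ ‖x‖ / 2) : ‖x‖ ^ 2 / 2 ≤ ⟪x, x + y⟫ := by
  have hxy : -(‖x‖ * ‖y‖) ≤ ⟪x, y⟫ := (abs_le.1 (abs_real_inner_le_norm x y)).1
  rw [inner_add_right, real_inner_self_eq_norm_sq]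
  nlinarith [norm_nonneg x]

lemma inner_neg_rpow_norm_smul_le {q : ℝ} (hq : 0 ≤ q) (hy : ‖y‖ ≤ ‖x‖ / 2) :
    ⟪x, -(‖x + y‖ ^ q) • (x + y)⟫ ≤ -(‖x‖ ^ (q + 2) / 2 ^ (q + 1)) := by
  have hpow : (‖x‖ / 2) ^ q ≤ ‖x + y‖ ^ q :=
    Real.rpow_le_rpow (by positivity) (half_norm_le_norm_add hy) hq
  have hprod : (‖x‖ / 2) ^ q * (‖x‖ ^ 2 / 2) ≤ ‖x + y‖ ^ q * ⟪x, x + y⟫ :=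
    mul_le_mul hpow (sq_norm_div_two_le_inner_add hy) (by positivity) (by positivity)
  have hval : (‖x‖ / 2) ^ q * (‖x‖ ^ 2 / 2) = ‖x‖ ^ (q + 2) / 2 ^ (q + 1) := by
    rw [Real.div_rpow (norm_nonneg x) zero_le_two, Real.rpow_add' (norm_nonneg x) (by linarith),
      Real.rpow_add two_pos, Real.rpow_two, Real.rpow_one]
    ring
  rw [neg_smul, inner_neg_right, real_inner_smul_right, ← hval]
  exact neg_le_neg hprod

end Drift

lemma sum_mul_norm_rpow_smul_single_sq {d : ℕ} (p q : ℝ) (z : EuclideanSpace ℝ (Fin d)) :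
    ∑ k : Fin d, p * ‖(‖z‖ ^ q) • EuclideanSpace.single k (1 : ℝ)‖ ^ 2 = d * p * ‖z‖ ^ (2 * q) := by
  have hnorm (k : Fin d) : ‖(‖z‖ ^ q) • EuclideanSpace.single k (1 : ℝ)‖ = ‖z‖ ^ q := by
    rw [norm_smul, PiLp.norm_single, norm_one, mul_one, Real.norm_eq_abs,
      abs_of_nonneg (by positivity)]
  simp only [hnorm, Finset.sum_const, Finset.card_univ, Fintype.card_fin, nsmul_eq_mul]
  rw [mul_comm 2 q, Real.rpow_mul (norm_nonneg z), Real.rpow_two]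
  ring

lemma exists_forall_mul_rpow_le {a b : ℝ} (hab : a < b) (A : ℝ) {c : ℝ} (hc : 0 < c) :
    ∃ R > 0, ∀ r ≥ R, A * r ^ a ≤ c * r ^ b := by
  have hlim : Tendsto (fun r : ℝ => A * r ^ (a - b)) atTop (nhds 0) := by
    simpa [neg_sub] using (tendsto_rpow_neg_atTop (sub_pos.2 hab)).const_mul A
  obtain ⟨R, hR⟩ := eventually_atTop.1 (hlim.eventually_lt_const hc)
  refine ⟨max R 1, by positivity, fun r hr => ?_⟩
  have hr0 : 0 < r := by linarith [le_max_right R 1]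
  calc A * r ^ a = A * r ^ (a - b) * r ^ b := by
        rw [mul_assoc, ← Real.rpow_add hr0, sub_add_cancel]
    _ ≤ c * r ^ b :=
        mul_le_mul_of_nonneg_right (hR r (le_of_max_le_left hr)).le (by positivity)

theorem stmt_10_general (d : ℕ) (q₂ q₄ p : ℝ) (hq₄ : 0 < q₄)
    (hq : 2 * q₂ < q₄ + 2) (hp : 0 < p)
    (X : Fin d → EuclideanSpace ℝ (Fin d) → EuclideanSpace ℝ (Fin d))
    (X0 : EuclideanSpace ℝ (Fin d) → EuclideanSpace ℝ (Fin d))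
    (hX : ∀ k x, X k x = (‖x‖ ^ q₂) • EuclideanSpace.single k (1 : ℝ))
    (hX0 : ∀ x, X0 x = -(‖x‖ ^ q₄) • x) :
    ∃ Cp > (0 : ℝ), ∃ R₀ > (0 : ℝ), ∀ x : EuclideanSpace ℝ (Fin d), R₀ ≤ ‖x‖ →
      (∀ y : EuclideanSpace ℝ (Fin d), ‖y‖ ≤ 1 →
        (∑ k : Fin d, p * ‖X k (x + y)‖ ^ 2) + ⟪x, X0 (x + y)⟫
          ≤ -Cp * (1 + ‖x‖ ^ (q₄ + 2))) ∧
      -Cp * (1 + ‖x‖ ^ (q₄ + 2)) ≤ Cp * (1 + ‖x‖ ^ (2 : ℝ)) := by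
  set κ : ℝ := 2 ^ (q₄ + 1)
  set A : ℝ := d * p * 2 ^ |2 * q₂|
  obtain ⟨R, -, hgrowth⟩ := exists_forall_mul_rpow_le hq A (c := 1 / (2 * κ)) (by positivity)
  refine ⟨1 / (4 * κ), by positivity, max 2 R, by positivity, fun x hx => ⟨fun y hy => ?_, ?_⟩⟩
  · have hx2 : 2 ≤ ‖x‖ := le_of_max_le_left hx
    have hy' : ‖y‖ ≤ ‖x‖ / 2 := by linarith
    have hdiffusion : ∑ k, p * ‖X k (x + y)‖ ^ 2 ≤ A * ‖x‖ ^ (2 * q₂) := by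
      simp only [hX, sum_mul_norm_rpow_smul_single_sq, A, mul_assoc]
      gcongr
      exact rpow_le_two_rpow_abs_mul_rpow _ (by linarith) (half_norm_le_norm_add hy')
        (norm_add_le_two_mul_norm hy')
    have hdrift : ⟪x, X0 (x + y)⟫ ≤ -(‖x‖ ^ (q₄ + 2) / κ) := by
      rw [hX0]; exact inner_neg_rpow_norm_smul_le hq₄.le hy'
    have hone : 1 ≤ ‖x‖ ^ (q₄ + 2) := Real.one_le_rpow (by linarith) (by linarith)
    have hhalf : 1 / (2 * κ) = 2 * (1 / (4 * κ)) := by field_simp; norm_num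
    have hfull : ‖x‖ ^ (q₄ + 2) / κ = 4 * (1 / (4 * κ)) * ‖x‖ ^ (q₄ + 2) := by field_simp
    have hCp : 0 < 1 / (4 * κ) := by positivity
    have hdominate := hgrowth ‖x‖ (le_of_max_le_right hx)
    rw [hhalf] at hdominate
    rw [hfull] at hdrift
    nlinarith
  · have hneg : 0 ≤ 1 / (4 * κ) * (1 + ‖x‖ ^ (q₄ + 2)) := by positivity
    have hpos : 0 ≤ 1 / (4 * κ) * (1 + ‖x‖ ^ (2 : ℝ)) := by positivity
    linarith

theorem stmt_10 (d : ℕ) (hd : 1 ≤ d) (q₂ q₄ p : ℝ) (hq₄ : 0 < q₄)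
    (hq : 2 * q₂ < q₄ + 2) (hp : 0 < p)
    (X : Fin d → EuclideanSpace ℝ (Fin d) → EuclideanSpace ℝ (Fin d))
    (X0 : EuclideanSpace ℝ (Fin d) → EuclideanSpace ℝ (Fin d))
    (hX : ∀ k x, X k x = (‖x‖ ^ q₂) • EuclideanSpace.single k (1 : ℝ))
    (hX0 : ∀ x, X0 x = -(‖x‖ ^ q₄) • x) :
    ∃ Cp > (0 : ℝ), ∃ R₀ > (0 : ℝ), ∀ x : EuclideanSpace ℝ (Fin d), R₀ ≤ ‖x‖ →
      (∀ y : EuclideanSpace ℝ (Fin d), ‖y‖ ≤ 1 →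
        (∑ k : Fin d, p * ‖X k (x + y)‖ ^ 2) + ⟪x, X0 (x + y)⟫
          ≤ -Cp * (1 + ‖x‖ ^ (q₄ + 2))) ∧
      -Cp * (1 + ‖x‖ ^ (q₄ + 2)) ≤ Cp * (1 + ‖x‖ ^ (2 : ℝ)) :=
  stmt_10_general d q₂ q₄ p hq₄ hq hp X X0 hX hX0
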